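/- In the setting of the threshold commutant identity, assume in addition: β > 0; β₀(x) ≥ 0 for all x ∈ U; η ∈ ℝ with 0 ≤ η ≤ (ℓ+1/2)β₀(x)β for all x ∈ U; φ₀, φ₁ ≥ 0 with φ₁' ≤ 0 on the range of τ; (Dρ₀(x)[V(x)])·φ₀'(ρ₀(x))·φ₀(ρ₀(x)) ≤ 0 for all x ∈ U; and let N > 0, t > 0, φ_t(ζ) = (1+tζ)^{-N}, φ̃_t(ζ) = tζ/(1+tζ), and ǎ_t(x) = φ_t(ρ(x)^{-1})·ǎ(x). Then for every x ∈ U one has the exact sum-of-squares decomposition ǎ_t·Dǎ_t[ρ^{-(m−1)}V] = η L^{-1} ρ^{-(m−1)} ǎ_t² + b_t² + b_{1,t}² + b_{2,t}² − e_t² + F, where (all functions evaluated at x, with φ₀ at ρ₀(x), φ₁ at τ(x), φ at 𝗉(x)): b_t = φ_t(ρ^{-1}) ρ^{-s} τ^{-r} L^{ℓ} φ₀φ₁φ √((ℓ+1/2)β₀β − η); b_{1,t} = φ_t(ρ^{-1}) ρ^{-s} τ^{-r} L^{ℓ+1/2} φ₀φ₁φ √(Nβ₀ φ̃_t(ρ^{-1}));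 b_{2,t} = φ_t(ρ^{-1}) ρ^{-s} τ^{-r} L^{ℓ+1/2} φ₀φ √(−β₀βτ φ₁' φ₁); e_t = φ_t(ρ^{-1}) ρ^{-s} τ^{-r} L^{ℓ+1/2} φ₁φ √(−(Dρ₀[V]) φ₀' φ₀); and F = φ_t(ρ^{-1})² ρ^{-2s} τ^{-2r} L^{2ℓ+1} (D𝗉[V]) φ'(𝗉) φ(𝗉) φ₀² φ₁². (This is the regularized commutator identity of the logarithmically improved radial point estimate, in which the main term, the regularizer term, and the spacelike-surface term all contribute squares with the same favorable sign.) -/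

import Mathlib

/-!
Along `V`, `ρ` and `τ` have logarithmic derivatives `β₀` and `-β₀β`. Since
`-s + (m-1)/2 = -βr`, the weight `ρ^{-s+(m-1)/2} τ^{-r}` is annihilated by `V`; moreover
`V L = β₀β` and `φ_t(ρ⁻¹)` has logarithmic derivative `Nβ₀ φ̃_t(ρ⁻¹)`. Hence
`Dǎ_t[V] = (Nβ₀φ̃_t + (ℓ+½)β₀β/L) ǎ_t + (chain-rule terms of φ₀, φ₁, φ)`. Multiplying by
`ρ^{-(m-1)}` turns `ǎ_t²` into `φ_t² ρ^{-2s} τ^{-2r} L^{2ℓ+1} (φ₀φ₁φ)²`, and splitting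
`(ℓ+½)β₀β = η + ((ℓ+½)β₀β - η)` gives the stated squares.
-/

open Real

variable {E : Type*} [NormedAddCommGroup E] [NormedSpace ℝ E]

def HasLogDerivAlong (f : E → ℝ) (κ : ℝ) (v x : E) : Prop :=
  DifferentiableAt ℝ f x ∧ fderiv ℝ f x v = κ * f x

namespace HasLogDerivAlong

variable {f g : E → ℝ} {κ μ : ℝ} {v x : E}

theorem mul (hf : HasLogDerivAlong f κ v x) (hg : HasLogDerivAlong g μ v x) :
    HasLogDerivAlong (fun y => f y * g y) (κ + μ) v x := by
  refine ⟨hf.1.mul hg.1, ?_⟩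
  rw [fderiv_fun_mul hf.1 hg.1]
  simp only [add_apply, smul_apply, smul_eq_mul, hf.2, hg.2]
  ring

theorem rpow_const (hf : HasLogDerivAlong f κ v x) (hx : f x ≠ 0) (p : ℝ) :
    HasLogDerivAlong (fun y => f y ^ p) (p * κ) v x := by
  refine ⟨hf.1.rpow_const (Or.inl hx), ?_⟩
  rw [(hf.1.hasFDerivAt.rpow_const (Or.inl hx)).fderiv, smul_apply, smul_eq_mul, hf.2,
    rpow_sub_one hx]
  field_simp

theorem log (hf : HasLogDerivAlong f κ v x) (hx : f x ≠ 0) (hlog : Real.log (f x) ≠ 0) :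
    HasLogDerivAlong (fun y => Real.log (f y)) (κ / Real.log (f x)) v x := by
  refine ⟨hf.1.log hx, ?_⟩
  rw [fderiv.log hf.1 hx, smul_apply, smul_eq_mul, hf.2]
  field_simp

theorem inv (hf : HasLogDerivAlong f κ v x) (hx : f x ≠ 0) :
    HasLogDerivAlong (fun y => (f y)⁻¹) (-κ) v x := by
  have h : HasFDerivAt (fun y => (f y)⁻¹) _ x :=
    (hasDerivAt_inv hx).comp_hasFDerivAt x hf.1.hasFDerivAt
  refine ⟨h.differentiableAt, ?_⟩
  rw [h.fderiv, smul_apply, smul_eq_mul, hf.2]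
  field_simp

theorem one_add_const_mul (hf : HasLogDerivAlong f κ v x) (c : ℝ) (hx : 1 + c * f x ≠ 0) :
    HasLogDerivAlong (fun y => 1 + c * f y) (κ * (c * f x / (1 + c * f x))) v x := by
  refine ⟨(hf.1.const_mul c).const_add 1, ?_⟩
  rw [fderiv_const_add, fderiv_const_mul hf.1, smul_apply, smul_eq_mul, hf.2]
  field_simp

theorem one_add_mul_inv_rpow_neg (hf : HasLogDerivAlong f κ v x) (hx : 0 < f x) {t : ℝ}
    (ht : 0 ≤ t) (N : ℝ) :
    HasLogDerivAlong (fun y => (1 + t * (f y)⁻¹) ^ (-N))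
      (N * κ * (t * (f x)⁻¹ / (1 + t * (f x)⁻¹))) v x := by
  have h1 : 1 + t * (f x)⁻¹ ≠ 0 := by positivity
  convert ((hf.inv hx.ne').one_add_const_mul t h1).rpow_const h1 (-N) using 1
  ring

theorem fderiv_mul_apply (hf : HasLogDerivAlong f κ v x) (hg : DifferentiableAt ℝ g x) :
    fderiv ℝ (fun y => f y * g y) x v = f x * (κ * g x + fderiv ℝ g x v) := by
  rw [fderiv_fun_mul hf.1 hg]
  simp only [add_apply, smul_apply, smul_eq_mul, hf.2]
  ring

end HasLogDerivAlong

theorem fderiv_comp_mul_comp_mul_comp_apply {φ₀ φ₁ φ₂ : ℝ → ℝ} {f₀ f₁ f₂ : E → ℝ} {x : E}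
    (hφ₀ : DifferentiableAt ℝ φ₀ (f₀ x)) (hφ₁ : DifferentiableAt ℝ φ₁ (f₁ x))
    (hφ₂ : DifferentiableAt ℝ φ₂ (f₂ x)) (hf₀ : DifferentiableAt ℝ f₀ x)
    (hf₁ : DifferentiableAt ℝ f₁ x) (hf₂ : DifferentiableAt ℝ f₂ x) (v : E) :
    fderiv ℝ (fun y => φ₀ (f₀ y) * φ₁ (f₁ y) * φ₂ (f₂ y)) x v =
      deriv φ₀ (f₀ x) * fderiv ℝ f₀ x v * φ₁ (f₁ x) * φ₂ (f₂ x) +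
        φ₀ (f₀ x) * (deriv φ₁ (f₁ x) * fderiv ℝ f₁ x v) * φ₂ (f₂ x) +
        φ₀ (f₀ x) * φ₁ (f₁ x) * (deriv φ₂ (f₂ x) * fderiv ℝ f₂ x v) := by
  have h₀ : HasFDerivAt (fun y => φ₀ (f₀ y)) _ x :=
    hφ₀.hasDerivAt.comp_hasFDerivAt x hf₀.hasFDerivAt
  have h₁ : HasFDerivAt (fun y => φ₁ (f₁ y)) _ x :=
    hφ₁.hasDerivAt.comp_hasFDerivAt x hf₁.hasFDerivAt
  have h₂ : HasFDerivAt (fun y => φ₂ (f₂ y)) _ x :=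
    hφ₂.hasDerivAt.comp_hasFDerivAt x hf₂.hasFDerivAt
  rw [((h₀.fun_mul h₁).fun_mul h₂).fderiv]
  simp only [add_apply, smul_apply, smul_eq_mul]
  ring

theorem Real.rpow_two_mul {x : ℝ} (hx : 0 ≤ x) (y : ℝ) : x ^ (2 * y) = (x ^ y) ^ 2 := by
  rw [mul_comm]
  exact_mod_cast rpow_mul_natCast hx y 2

section Threshold

variable {ρ τ : E → ℝ} {β β₀ : ℝ} {v x : E}

theorem HasLogDerivAlong.commutant_weight (hρ : HasLogDerivAlong ρ β₀ v x)
    (hτ : HasLogDerivAlong τ (-(β₀ * β)) v x) (hρ0 : ρ x ≠ 0) (hτ0 : τ x ≠ 0) {m r s : ℝ}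
    (hs : s = (m - 1) / 2 + β * r) :
    HasLogDerivAlong (fun y => ρ y ^ (-s + (m - 1) / 2) * τ y ^ (-r)) 0 v x := by
  convert (hρ.rpow_const hρ0 _).mul (hτ.rpow_const hτ0 (-r)) using 1
  rw [hs]
  ring

theorem HasLogDerivAlong.log_rpow (hρ : HasLogDerivAlong ρ β₀ v x)
    (hτ : HasLogDerivAlong τ (-(β₀ * β)) v x) (hρ0 : ρ x ≠ 0) (hτ0 : τ x ≠ 0)
    (h1 : 1 < ρ x ^ (-β) * τ x ^ (-2 : ℝ)) (q : ℝ) :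
    HasLogDerivAlong (fun y => Real.log (ρ y ^ (-β) * τ y ^ (-2 : ℝ)) ^ q)
      (q * (β₀ * β) / Real.log (ρ x ^ (-β) * τ x ^ (-2 : ℝ))) v x := by
  have hlog : Real.log (ρ x ^ (-β) * τ x ^ (-2 : ℝ)) ≠ 0 := (Real.log_pos h1).ne'
  convert (((hρ.rpow_const hρ0 _).mul (hτ.rpow_const hτ0 _)).log (one_pos.trans h1).ne'
    hlog).rpow_const hlog q using 1
  ring

theorem HasLogDerivAlong.regularized_radial (hρ : HasLogDerivAlong ρ β₀ v x)
    (hτ : HasLogDerivAlong τ (-(β₀ * β)) v x) (hρ0 : 0 < ρ x) (hτ0 : τ x ≠ 0) {m r s : ℝ}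
    (hs : s = (m - 1) / 2 + β * r) (h1 : 1 < ρ x ^ (-β) * τ x ^ (-2 : ℝ)) {t : ℝ} (ht : 0 ≤ t)
    (N q : ℝ) :
    HasLogDerivAlong (fun y => (1 + t * (ρ y)⁻¹) ^ (-N) * (ρ y ^ (-s + (m - 1) / 2) *
        τ y ^ (-r) * Real.log (ρ y ^ (-β) * τ y ^ (-2 : ℝ)) ^ q))
      (N * β₀ * (t * (ρ x)⁻¹ / (1 + t * (ρ x)⁻¹)) +
        q * (β₀ * β) / Real.log (ρ x ^ (-β) * τ x ^ (-2 : ℝ))) v x := by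
  convert (hρ.one_add_mul_inv_rpow_neg hρ0 ht N).mul ((hρ.commutant_weight hτ hρ0.ne' hτ0 hs).mul
    (hρ.log_rpow hτ hρ0.ne' hτ0 h1 q)) using 1
  ring

theorem fderiv_regularized_commutant_apply {φ₀ φ₁ φ : ℝ → ℝ} {ρ₀ p : E → ℝ}
    (hρ : HasLogDerivAlong ρ β₀ v x) (hτ : HasLogDerivAlong τ (-(β₀ * β)) v x) (hρ0 : 0 < ρ x)
    (hτ0 : τ x ≠ 0) {m r s : ℝ} (hs : s = (m - 1) / 2 + β * r)
    (h1 : 1 < ρ x ^ (-β) * τ x ^ (-2 : ℝ)) {t : ℝ} (ht : 0 ≤ t) (N q : ℝ)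
    (hφ₀ : DifferentiableAt ℝ φ₀ (ρ₀ x)) (hφ₁ : DifferentiableAt ℝ φ₁ (τ x))
    (hφ : DifferentiableAt ℝ φ (p x)) (hρ₀ : DifferentiableAt ℝ ρ₀ x)
    (hp : DifferentiableAt ℝ p x) :
    fderiv ℝ (fun y => (1 + t * (ρ y)⁻¹) ^ (-N) * (ρ y ^ (-s + (m - 1) / 2) * τ y ^ (-r) *
        Real.log (ρ y ^ (-β) * τ y ^ (-2 : ℝ)) ^ q * φ₀ (ρ₀ y) * φ₁ (τ y) * φ (p y))) x v =
      (1 + t * (ρ x)⁻¹) ^ (-N) *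
        (ρ x ^ (-s + (m - 1) / 2) * τ x ^ (-r) * Real.log (ρ x ^ (-β) * τ x ^ (-2 : ℝ)) ^ q) *
        ((N * β₀ * (t * (ρ x)⁻¹ / (1 + t * (ρ x)⁻¹)) +
            q * (β₀ * β) / Real.log (ρ x ^ (-β) * τ x ^ (-2 : ℝ))) *
            (φ₀ (ρ₀ x) * φ₁ (τ x) * φ (p x)) +
          (deriv φ₀ (ρ₀ x) * fderiv ℝ ρ₀ x v * φ₁ (τ x) * φ (p x) +
            φ₀ (ρ₀ x) * (deriv φ₁ (τ x) * (-(β₀ * β) * τ x)) * φ (p x) +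
            φ₀ (ρ₀ x) * φ₁ (τ x) * (deriv φ (p x) * fderiv ℝ p x v))) := by
  have hcutoff : DifferentiableAt ℝ (fun y => φ₀ (ρ₀ y) * φ₁ (τ y) * φ (p y)) x :=
    ((hφ₀.comp x hρ₀).mul (hφ₁.comp x hτ.1)).mul (hφ.comp x hp)
  have h := (hρ.regularized_radial hτ hρ0 hτ0 hs h1 ht N q).fderiv_mul_apply hcutoff
  rw [fderiv_comp_mul_comp_mul_comp_apply hφ₀ hφ₁ hφ hρ₀ hτ.1 hp, hτ.2] at h
  convert h using 3
  funext y
  ring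

end Threshold

theorem radial_commutant_regularized_identity_general (n : ℕ)
    (U : Set (EuclideanSpace ℝ (Fin n)))
    (V : EuclideanSpace ℝ (Fin n) → EuclideanSpace ℝ (Fin n))
    (β m r ℓ s : ℝ) (hs : s = (m - 1)/2 + β * r) (hβ : 0 < β)
    (ρ τ β₀ ρ₀ p : EuclideanSpace ℝ (Fin n) → ℝ)
    (hρpos : ∀ x ∈ U, 0 < ρ x) (hτpos : ∀ x ∈ U, 0 < τ x)
    (hβ₀ : ∀ x ∈ U, 0 ≤ β₀ x)
    (hρdiff : ∀ x ∈ U, DifferentiableAt ℝ ρ x)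
    (hτdiff : ∀ x ∈ U, DifferentiableAt ℝ τ x)
    (hρ₀diff : ∀ x ∈ U, DifferentiableAt ℝ ρ₀ x)
    (hpdiff : ∀ x ∈ U, DifferentiableAt ℝ p x)
    (hρder : ∀ x ∈ U, fderiv ℝ ρ x (V x) = β₀ x * ρ x)
    (hτder : ∀ x ∈ U, fderiv ℝ τ x (V x) = -(β₀ x * β * τ x))
    (hL1 : ∀ x ∈ U, 1 < ρ x ^ (-β) * τ x ^ (-2 : ℝ))
    (φ₀ φ₁ φ : ℝ → ℝ)
    (hφ₀ : ContDiff ℝ 1 φ₀) (hφ₁ : ContDiff ℝ 1 φ₁) (hφ : ContDiff ℝ 1 φ)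
    (hφ₁pos : ∀ y : ℝ, 0 ≤ φ₁ y)
    (hφ₁der : ∀ x ∈ U, deriv φ₁ (τ x) ≤ 0)
    (hρ₀sign : ∀ x ∈ U, fderiv ℝ ρ₀ x (V x) * deriv φ₀ (ρ₀ x) * φ₀ (ρ₀ x) ≤ 0)
    (η : ℝ) (hηle : ∀ x ∈ U, η ≤ (ℓ + 1/2) * β₀ x * β)
    (N t : ℝ) (hN : 0 < N) (ht : 0 < t)
    (L ca φt φtt cat bt b1t b2t et F : EuclideanSpace ℝ (Fin n) → ℝ)
    (hL : L = fun x => Real.log (ρ x ^ (-β) * τ x ^ (-2 : ℝ)))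
    (hca : ca = fun x => ρ x ^ (-s + (m - 1)/2) * τ x ^ (-r) * L x ^ (ℓ + 1/2) *
      φ₀ (ρ₀ x) * φ₁ (τ x) * φ (p x))
    -- the regularizer `φ_t(ρ̂⁻¹)` and `φ̃_t(ρ̂⁻¹)`:
    (hφt : φt = fun x => (1 + t * (ρ x)⁻¹) ^ (-N))
    (hφtt : φtt = fun x => t * (ρ x)⁻¹ / (1 + t * (ρ x)⁻¹))
    (hcat : cat = fun x => φt x * ca x)
    (hbt : bt = fun x => φt x * ρ x ^ (-s) * τ x ^ (-r) * L x ^ ℓ *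
      (φ₀ (ρ₀ x) * φ₁ (τ x) * φ (p x)) * Real.sqrt ((ℓ + 1/2) * β₀ x * β - η))
    (hb1t : b1t = fun x => φt x * ρ x ^ (-s) * τ x ^ (-r) * L x ^ (ℓ + 1/2) *
      (φ₀ (ρ₀ x) * φ₁ (τ x) * φ (p x)) * Real.sqrt (N * β₀ x * φtt x))
    (hb2t : b2t = fun x => φt x * ρ x ^ (-s) * τ x ^ (-r) * L x ^ (ℓ + 1/2) *
      (φ₀ (ρ₀ x) * φ (p x)) *
      Real.sqrt (-(β₀ x * β * τ x * deriv φ₁ (τ x) * φ₁ (τ x))))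
    (het : et = fun x => φt x * ρ x ^ (-s) * τ x ^ (-r) * L x ^ (ℓ + 1/2) *
      (φ₁ (τ x) * φ (p x)) *
      Real.sqrt (-(fderiv ℝ ρ₀ x (V x) * deriv φ₀ (ρ₀ x) * φ₀ (ρ₀ x))))
    (hF : F = fun x => (φt x) ^ 2 * ρ x ^ (-(2 * s)) * τ x ^ (-(2 * r)) *
      L x ^ (2 * ℓ + 1) * fderiv ℝ p x (V x) * deriv φ (p x) * φ (p x) *
      (φ₀ (ρ₀ x)) ^ 2 * (φ₁ (τ x)) ^ 2) :
    ∀ x ∈ U,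
      cat x * fderiv ℝ cat x ((ρ x ^ (-(m - 1))) • V x)
        = η * (L x)⁻¹ * ρ x ^ (-(m - 1)) * (cat x) ^ 2
          + (bt x) ^ 2 + (b1t x) ^ 2 + (b2t x) ^ 2 - (et x) ^ 2 + F x := by
  intro x hx
  have hρx := hρpos x hx
  have hτx := hτpos x hx
  have hLx : 0 < L x := hL ▸ Real.log_pos (hL1 x hx)
  have hβ₀x := hβ₀ x hx
  have hρ : HasLogDerivAlong ρ (β₀ x) (V x) x := ⟨hρdiff x hx, hρder x hx⟩
  have hτ : HasLogDerivAlong τ (-(β₀ x * β)) (V x) x := ⟨hτdiff x hx, by rw [hτder x hx]; ring⟩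
  have hD := fderiv_regularized_commutant_apply hρ hτ hρx hτx.ne' hs (hL1 x hx) ht.le N
    (ℓ + 1 / 2) (hφ₀.differentiable one_ne_zero _) (hφ₁.differentiable one_ne_zero _)
    (hφ.differentiable one_ne_zero _) (hρ₀diff x hx) (hpdiff x hx)
  have hX1 : 0 ≤ (ℓ + 1 / 2) * β₀ x * β - η := sub_nonneg.2 (hηle x hx)
  have hX2 : 0 ≤ N * β₀ x * (t * (ρ x)⁻¹ / (1 + t * (ρ x)⁻¹)) := by positivity
  have hX3 : 0 ≤ -(β₀ x * β * τ x * deriv φ₁ (τ x) * φ₁ (τ x)) :=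
    neg_nonneg.2 (mul_nonpos_of_nonpos_of_nonneg
      (mul_nonpos_of_nonneg_of_nonpos (by positivity) (hφ₁der x hx)) (hφ₁pos _))
  have hX4 := neg_nonneg.2 (hρ₀sign x hx)
  have hw : ρ x ^ (-(m - 1)) = (ρ x ^ (-s)) ^ 2 / (ρ x ^ (-s + (m - 1) / 2)) ^ 2 := by
    rw [eq_div_iff (by positivity), ← rpow_two_mul hρx.le, ← rpow_two_mul hρx.le,
      ← rpow_add hρx]
    ring_nf
  have hP : (L x ^ ℓ) ^ 2 = (L x ^ (ℓ + 1 / 2)) ^ 2 / L x := by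
    rw [← rpow_two_mul hLx.le, ← rpow_two_mul hLx.le, ← rpow_sub_one hLx.ne']
    ring_nf
  subst hL hca hφt hφtt hcat hbt hb1t hb2t het hF
  beta_reduce
  rw [map_smul, smul_eq_mul, hD]
  simp only [mul_pow, Real.sq_sqrt hX1, Real.sq_sqrt hX2, Real.sq_sqrt hX3, Real.sq_sqrt hX4]
  rw [hw, hP, show -(2 * s) = 2 * -s by ring, show -(2 * r) = 2 * -r by ring,
    show 2 * ℓ + 1 = 2 * (ℓ + 1 / 2) by ring, rpow_two_mul hρx.le, rpow_two_mul hτx.le,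
    rpow_two_mul hLx.le]
  field_simp
  ring

/-- The regularized commutator identity of the logarithmically improved radial point estimate:
in the setting of the threshold commutant identity (`s = (m−1)/2 + βr`,
`L = log(ρ^{-β}τ^{-2})`, `ǎ = ρ^{-s+(m−1)/2} τ^{-r} L^{ℓ+1/2} φ₀(ρ₀)φ₁(τ)φ(p)`), with
`β > 0`, `β₀ ≥ 0`, `0 ≤ η ≤ (ℓ+1/2)β₀β`, `φ₀, φ₁ ≥ 0`, `φ₁' ≤ 0` on the range of `τ`,
`(Dρ₀[V])φ₀'(ρ₀)φ₀(ρ₀) ≤ 0`, and the regularizers `φ_t(ζ) = (1+tζ)^{-N}`,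
`φ̃_t(ζ) = tζ/(1+tζ)`, `ǎ_t = φ_t(ρ⁻¹)ǎ`, one has the exact sum-of-squares decomposition
`ǎ_t·Dǎ_t[ρ^{-(m−1)}V] = η L⁻¹ ρ^{-(m−1)} ǎ_t² + b_t² + b_{1,t}² + b_{2,t}² − e_t² + F`. -/
theorem radial_commutant_regularized_identity (n : ℕ)
    (U : Set (EuclideanSpace ℝ (Fin n))) (hU : IsOpen U)
    (V : EuclideanSpace ℝ (Fin n) → EuclideanSpace ℝ (Fin n))
    (β m r ℓ s : ℝ) (hs : s = (m - 1)/2 + β * r) (hβ : 0 < β)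
    (ρ τ β₀ ρ₀ p : EuclideanSpace ℝ (Fin n) → ℝ)
    (hρpos : ∀ x ∈ U, 0 < ρ x) (hτpos : ∀ x ∈ U, 0 < τ x)
    (hβ₀ : ∀ x ∈ U, 0 ≤ β₀ x)
    (hρdiff : ∀ x ∈ U, DifferentiableAt ℝ ρ x)
    (hτdiff : ∀ x ∈ U, DifferentiableAt ℝ τ x)
    (hρ₀diff : ∀ x ∈ U, DifferentiableAt ℝ ρ₀ x)
    (hpdiff : ∀ x ∈ U, DifferentiableAt ℝ p x)
    (hρder : ∀ x ∈ U, fderiv ℝ ρ x (V x) = β₀ x * ρ x)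
    (hτder : ∀ x ∈ U, fderiv ℝ τ x (V x) = -(β₀ x * β * τ x))
    (hL1 : ∀ x ∈ U, 1 < ρ x ^ (-β) * τ x ^ (-2 : ℝ))
    (φ₀ φ₁ φ : ℝ → ℝ)
    (hφ₀ : ContDiff ℝ 1 φ₀) (hφ₁ : ContDiff ℝ 1 φ₁) (hφ : ContDiff ℝ 1 φ)
    (hφ₀pos : ∀ y : ℝ, 0 ≤ φ₀ y) (hφ₁pos : ∀ y : ℝ, 0 ≤ φ₁ y)
    (hφ₁der : ∀ x ∈ U, deriv φ₁ (τ x) ≤ 0)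
    (hρ₀sign : ∀ x ∈ U, fderiv ℝ ρ₀ x (V x) * deriv φ₀ (ρ₀ x) * φ₀ (ρ₀ x) ≤ 0)
    (η : ℝ) (hη : 0 ≤ η) (hηle : ∀ x ∈ U, η ≤ (ℓ + 1/2) * β₀ x * β)
    (N t : ℝ) (hN : 0 < N) (ht : 0 < t)
    (L ca φt φtt cat bt b1t b2t et F : EuclideanSpace ℝ (Fin n) → ℝ)
    (hL : L = fun x => Real.log (ρ x ^ (-β) * τ x ^ (-2 : ℝ)))
    (hca : ca = fun x => ρ x ^ (-s + (m - 1)/2) * τ x ^ (-r) * L x ^ (ℓ + 1/2) *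
      φ₀ (ρ₀ x) * φ₁ (τ x) * φ (p x))
    -- the regularizer `φ_t(ρ̂⁻¹)` and `φ̃_t(ρ̂⁻¹)`:
    (hφt : φt = fun x => (1 + t * (ρ x)⁻¹) ^ (-N))
    (hφtt : φtt = fun x => t * (ρ x)⁻¹ / (1 + t * (ρ x)⁻¹))
    (hcat : cat = fun x => φt x * ca x)
    (hbt : bt = fun x => φt x * ρ x ^ (-s) * τ x ^ (-r) * L x ^ ℓ *
      (φ₀ (ρ₀ x) * φ₁ (τ x) * φ (p x)) * Real.sqrt ((ℓ + 1/2) * β₀ x * β - η))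
    (hb1t : b1t = fun x => φt x * ρ x ^ (-s) * τ x ^ (-r) * L x ^ (ℓ + 1/2) *
      (φ₀ (ρ₀ x) * φ₁ (τ x) * φ (p x)) * Real.sqrt (N * β₀ x * φtt x))
    (hb2t : b2t = fun x => φt x * ρ x ^ (-s) * τ x ^ (-r) * L x ^ (ℓ + 1/2) *
      (φ₀ (ρ₀ x) * φ (p x)) *
      Real.sqrt (-(β₀ x * β * τ x * deriv φ₁ (τ x) * φ₁ (τ x))))
    (het : et = fun x => φt x * ρ x ^ (-s) * τ x ^ (-r) * L x ^ (ℓ + 1/2) *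
      (φ₁ (τ x) * φ (p x)) *
      Real.sqrt (-(fderiv ℝ ρ₀ x (V x) * deriv φ₀ (ρ₀ x) * φ₀ (ρ₀ x))))
    (hF : F = fun x => (φt x) ^ 2 * ρ x ^ (-(2 * s)) * τ x ^ (-(2 * r)) *
      L x ^ (2 * ℓ + 1) * fderiv ℝ p x (V x) * deriv φ (p x) * φ (p x) *
      (φ₀ (ρ₀ x)) ^ 2 * (φ₁ (τ x)) ^ 2) :
    ∀ x ∈ U,
      cat x * fderiv ℝ cat x ((ρ x ^ (-(m - 1))) • V x)
        = η * (L x)⁻¹ * ρ x ^ (-(m - 1)) * (cat x) ^ 2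
          + (bt x) ^ 2 + (b1t x) ^ 2 + (b2t x) ^ 2 - (et x) ^ 2 + F x :=
  radial_commutant_regularized_identity_general n U V β m r ℓ s hs hβ ρ τ β₀ ρ₀ p hρpos hτpos hβ₀
    hρdiff hτdiff hρ₀diff hpdiff hρder hτder hL1 φ₀ φ₁ φ hφ₀ hφ₁ hφ hφ₁pos hφ₁der hρ₀sign η hηle N t
    hN ht L ca φt φtt cat bt b1t b2t et F hL hca hφt hφtt hcat hbt hb1t hb2t het hF
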